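/- If a serial episode α of N nodes has f_mi minimal windows, then its (N−1)-node suffix subepisode α_s = α[2]→...→α[N] has at least f_mi minimal windows. -/

import Mathlib

variable {A : Type}

/-- An occurrence of the (N+1)-node serial episode `α` in the event sequence
`E` (of length `n`): a strictly increasing index map matching the event-types. -/
def IsOcc (E : ℕ → A) (n : ℕ) {N : ℕ} (α : Fin (N+1) → A) (h : Fin (N+1) → ℕ) : Prop :=
  StrictMono h ∧ (∀ i, h i < n) ∧ (∀ i, E (h i) = α i)

/-- Earliest transiting occurrence: each `h i.succ` is the least index after
`h i.castSucc` carrying event-type `α i.succ`. -/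
def IsET (E : ℕ → A) (n : ℕ) {N : ℕ} (α : Fin (N+1) → A) (h : Fin (N+1) → ℕ) : Prop :=
  IsOcc E n α h ∧ ∀ (i : Fin N) (j : ℕ), h i.castSucc < j → E j = α i.succ → h i.succ ≤ j

/-- Lexicographic order on occurrences. -/
def OccLex {N : ℕ} (h1 h2 : Fin (N+1) → ℕ) : Prop :=
  ∃ i, (∀ k < i, h1 k = h2 k) ∧ h1 i < h2 i

/-- The window `[a, b]` contains an occurrence of `α`. -/
def WindowHasOcc (E : ℕ → A) (n : ℕ) {N : ℕ} (α : Fin (N+1) → A) (a b : ℕ) : Prop :=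
  ∃ h, IsOcc E n α h ∧ a ≤ h 0 ∧ h (Fin.last N) ≤ b

/-- `[a, b]` is a minimal window of `α`: it contains an occurrence and no
proper subwindow contains one. -/
def IsMinWindow (E : ℕ → A) (n : ℕ) {N : ℕ} (α : Fin (N+1) → A) (a b : ℕ) : Prop :=
  WindowHasOcc E n α a b ∧
    ∀ c d, a ≤ c → d ≤ b → (a < c ∨ d < b) → ¬ WindowHasOcc E n α c d

/-- A minimal occurrence: its window is a minimal window. -/
def IsMinOcc (E : ℕ → A) (n : ℕ) {N : ℕ} (α : Fin (N+1) → A) (h : Fin (N+1) → ℕ) : Prop :=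
  IsOcc E n α h ∧ IsMinWindow E n α (h 0) (h (Fin.last N))

/-- `h'` is the earliest transiting occurrence immediately following `h`
in the lexicographic enumeration of earliest transiting occurrences. -/
def NextET (E : ℕ → A) (n : ℕ) {N : ℕ} (α : Fin (N+1) → A) (h h' : Fin (N+1) → ℕ) : Prop :=
  IsET E n α h ∧ IsET E n α h' ∧ OccLex h h' ∧
    ¬ ∃ g, IsET E n α g ∧ OccLex h g ∧ OccLex g h'

/-- `h1 <⋆ h2` are non-interleaved: `h2 (v_j) ≥ h1 (v_{j+1})` for all `j < N`. -/
def NonInterleaved {N : ℕ} (h1 h2 : Fin (N+1) → ℕ) : Prop :=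
  ∀ i : Fin N, h1 i.succ ≤ h2 i.castSucc

/-- Non-overlapped occurrences: one ends strictly before the other begins. -/
def NonOverlapped {N : ℕ} (h1 h2 : Fin (N+1) → ℕ) : Prop :=
  h1 (Fin.last N) < h2 0 ∨ h2 (Fin.last N) < h1 0

/-!
Every minimal window `[a, b]` of `α` contains, inside `(a, b]`, a minimal window of the suffix:
drop the first event of an occurrence spanning `[a, b]` and shrink the remaining window. This
assignment is injective: if minimal windows starting at `a₁ < a₂` were sent to the same `[c, d]`,
prepending `a₂` to an occurrence of the suffix in `[c, d]` would give an occurrence of `α` in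
`[a₂, d]`, a proper subwindow of the first one.
-/

section MinWindows

variable {E : ℕ → A} {n N : ℕ}

lemma WindowHasOcc.le {α : Fin (N+1) → A} {a b : ℕ} (hw : WindowHasOcc E n α a b) : a ≤ b := by
  obtain ⟨h, hocc, ha, hb⟩ := hw
  exact ha.trans ((hocc.1.monotone (Fin.zero_le _)).trans hb)

lemma IsMinWindow.exists_isOcc {α : Fin (N+1) → A} {a b : ℕ} (hm : IsMinWindow E n α a b) :
    ∃ h, IsOcc E n α h ∧ h 0 = a ∧ h (Fin.last N) = b := by
  obtain ⟨⟨h, hocc, ha, hb⟩, hmin⟩ := hm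
  refine ⟨h, hocc, ?_, ?_⟩
  · by_contra hne
    exact hmin _ b ha le_rfl (Or.inl (ha.lt_of_ne' hne)) ⟨h, hocc, le_rfl, hb⟩
  · by_contra hne
    exact hmin a _ le_rfl hb (Or.inr (hb.lt_of_ne hne)) ⟨h, hocc, ha, le_rfl⟩

lemma IsMinWindow.lt {α : Fin (N+1) → A} {a b : ℕ} (hm : IsMinWindow E n α a b) :
    a < n ∧ b < n := by
  obtain ⟨h, hocc, rfl, rfl⟩ := hm.exists_isOcc
  exact ⟨hocc.2.1 _, hocc.2.1 _⟩

lemma IsMinWindow.apply_left {α : Fin (N+1) → A} {a b : ℕ} (hm : IsMinWindow E n α a b) :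
    E a = α 0 := by
  obtain ⟨h, hocc, rfl, -⟩ := hm.exists_isOcc
  exact hocc.2.2 0

lemma IsMinWindow.eq_of_left_eq {α : Fin (N+1) → A} {a₁ b₁ a₂ b₂ : ℕ}
    (hm₁ : IsMinWindow E n α a₁ b₁) (hm₂ : IsMinWindow E n α a₂ b₂) (ha : a₁ = a₂) :
    b₁ = b₂ := by
  by_contra hne
  rcases Nat.lt_or_gt_of_ne hne with hb | hb
  · exact hm₂.2 a₁ b₁ ha.ge hb.le (Or.inr hb) hm₁.1
  · exact hm₁.2 a₂ b₂ ha.le hb.le (Or.inr hb) hm₂.1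

lemma WindowHasOcc.exists_isMinWindow {α : Fin (N+1) → A} {a b : ℕ}
    (hw : WindowHasOcc E n α a b) : ∃ c d, a ≤ c ∧ d ≤ b ∧ IsMinWindow E n α c d := by
  -- a narrowest subwindow containing an occurrence is minimal
  obtain ⟨⟨c, d⟩, ⟨hac, hdb, hcd⟩, hnarrowest⟩ :=
    (measure fun p : ℕ × ℕ => p.2 - p.1).wf.has_min
      {p | a ≤ p.1 ∧ p.2 ≤ b ∧ WindowHasOcc E n α p.1 p.2} ⟨(a, b), le_rfl, le_rfl, hw⟩
  refine ⟨c, d, hac, hdb, hcd, fun c' d' hc' hd' hlt hw' => ?_⟩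
  refine hnarrowest (c', d') ⟨hac.trans hc', hd'.trans hdb, hw'⟩ ?_
  have := hw'.le
  show d' - c' < d - c
  omega

lemma IsOcc.tail {α : Fin (N+2) → A} {h : Fin (N+2) → ℕ} (hocc : IsOcc E n α h) :
    IsOcc E n (Fin.tail α) (Fin.tail h) :=
  ⟨hocc.1.comp Fin.strictMono_succ, fun _ => hocc.2.1 _, fun _ => hocc.2.2 _⟩

lemma IsOcc.cons {α : Fin (N+2) → A} {g : Fin (N+1) → ℕ} {a : ℕ}
    (hg : IsOcc E n (Fin.tail α) g) (hag : a < g 0) (hEa : E a = α 0) :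
    IsOcc E n α (Fin.cons a g) := by
  obtain ⟨gmono, glt, gE⟩ := hg
  refine ⟨gmono.vecCons hag, ?_, ?_⟩ <;> refine Fin.cases ?_ fun i => ?_
  · exact hag.trans (glt 0)
  · exact glt i
  · exact hEa
  · exact gE i

lemma WindowHasOcc.cons {α : Fin (N+2) → A} {a c d : ℕ}
    (hw : WindowHasOcc E n (Fin.tail α) c d) (hac : a < c) (hEa : E a = α 0) :
    WindowHasOcc E n α a d := by
  obtain ⟨g, hg, hcg, hgd⟩ := hw
  exact ⟨Fin.cons a g, hg.cons (hac.trans_le hcg) hEa, le_rfl, by simpa [← Fin.succ_last]⟩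

lemma IsMinWindow.exists_isMinWindow_tail {α : Fin (N+2) → A} {a b : ℕ}
    (hm : IsMinWindow E n α a b) :
    ∃ c d, a < c ∧ d ≤ b ∧ IsMinWindow E n (Fin.tail α) c d := by
  obtain ⟨h, hocc, rfl, rfl⟩ := hm.exists_isOcc
  have hw : WindowHasOcc E n (Fin.tail α) (h 1) (h (Fin.last (N+1))) :=
    ⟨Fin.tail h, hocc.tail, le_rfl, by simp [Fin.tail, ← Fin.succ_last]⟩
  obtain ⟨c, d, hc, hd, hcd⟩ := hw.exists_isMinWindow
  exact ⟨c, d, (hocc.1 Fin.zero_lt_one).trans_le hc, hd, hcd⟩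

lemma IsMinWindow.eq_of_tail_window {α : Fin (N+2) → A} {a₁ b₁ a₂ b₂ c d : ℕ}
    (hm₁ : IsMinWindow E n α a₁ b₁) (hm₂ : IsMinWindow E n α a₂ b₂)
    (hw : WindowHasOcc E n (Fin.tail α) c d)
    (hc₁ : a₁ < c) (hc₂ : a₂ < c) (hd₁ : d ≤ b₁) (hd₂ : d ≤ b₂) : (a₁, b₁) = (a₂, b₂) := by
  have ha : a₁ = a₂ := by
    by_contra hne
    rcases Nat.lt_or_gt_of_ne hne with ha | ha
    · exact hm₁.2 a₂ d ha.le hd₁ (Or.inl ha) (hw.cons hc₂ hm₂.apply_left)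
    · exact hm₂.2 a₁ d ha.le hd₂ (Or.inl ha) (hw.cons hc₁ hm₁.apply_left)
  exact Prod.ext ha (hm₁.eq_of_left_eq hm₂ ha)

lemma setOf_isMinWindow_finite (α : Fin (N+1) → A) :
    {p : ℕ × ℕ | IsMinWindow E n α p.1 p.2}.Finite :=
  ((Set.finite_Iio n).prod (Set.finite_Iio n)).subset fun _ hp => hp.lt

end MinWindows

theorem stmt14 (E : ℕ → A) (n : ℕ) {N : ℕ} (α : Fin (N+2) → A) :
    {p : ℕ × ℕ | IsMinWindow E n α p.1 p.2}.ncard ≤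
      {p : ℕ × ℕ |
        IsMinWindow E n (fun i : Fin (N+1) => α i.succ) p.1 p.2}.ncard := by
  have exists_tail_window : ∀ p ∈ {p : ℕ × ℕ | IsMinWindow E n α p.1 p.2}, ∃ q : ℕ × ℕ,
      IsMinWindow E n (Fin.tail α) q.1 q.2 ∧ p.1 < q.1 ∧ q.2 ≤ p.2 := by
    rintro ⟨a, b⟩ hm
    obtain ⟨c, d, hac, hdb, hcd⟩ := hm.exists_isMinWindow_tail
    exact ⟨(c, d), hcd, hac, hdb⟩
  choose! f hf using exists_tail_window
  refine Set.ncard_le_ncard_of_injOn f (fun p hp => (hf p hp).1) ?_ (setOf_isMinWindow_finite _)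
  intro p₁ hp₁ p₂ hp₂ hf_eq
  obtain ⟨hq, hc₁, hd₁⟩ := hf p₁ hp₁
  obtain ⟨-, hc₂, hd₂⟩ := hf p₂ hp₂
  rw [← hf_eq] at hc₂ hd₂
  exact IsMinWindow.eq_of_tail_window hp₁ hp₂ hq.1 hc₁ hc₂ hd₁ hd₂
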